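/- Let (x_n) be a normalized block sequence in (c₀₀, ‖·‖_{JT_{2,p}}) such that lim_n ‖x_n|_σ‖ = 0 for every branch σ of 𝒯. Then for every ε > 0 and every n₀ ∈ ℕ there exists an infinite set L ⊆ ℕ such that for every segment s with min s ≤ n₀ there is at most one n ∈ L with ‖x_n|_s‖ ≥ ε. -/

import Mathlib

open Set Filter Topology

/-- `k` is an immediate successor of `n` in the order `le`. -/
def ImmSucc (le : ℕ → ℕ → Prop) (n k : ℕ) : Prop :=
  le n k ∧ n ≠ k ∧ ∀ m, le n m → le m k → m = n ∨ m = k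

/-- The tree `𝒯`: a partial order on `ℕ` compatible with the usual order, in which the set of
strict predecessors of every element is finite and linearly ordered, and every element has
infinitely many immediate successors. -/
structure IsJTTree (le : ℕ → ℕ → Prop) : Prop where
  refl : ∀ n, le n n
  antisymm : ∀ {m n}, le m n → le n m → m = n
  trans : ∀ {a b c}, le a b → le b c → le a c
  compat : ∀ {m n}, le m n → m ≤ n
  pred_finite : ∀ n, {m | le m n ∧ m ≠ n}.Finite
  pred_linear : ∀ n a b, le a n → le b n → le a b ∨ le b a
  succ_infinite : ∀ n, {k | ImmSucc le n k}.Infinite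

/-- A segment of the tree: a nonempty set of the form `{k : m ⪯ k ∧ k ⪯ n}`. -/
def IsSegment (le : ℕ → ℕ → Prop) (s : Set ℕ) : Prop :=
  ∃ m n, le m n ∧ s = {k | le m k ∧ le k n}

/-- A branch: a maximal linearly ordered subset of `ℕ`. -/
def IsBranch (le : ℕ → ℕ → Prop) (σ : Set ℕ) : Prop :=
  IsChain le σ ∧ ∀ τ, IsChain le τ → σ ⊆ τ → σ = τ

/-- `‖x‖_s = (∑_{i ∈ s} x(i)²)^(1/2)`. -/
noncomputable def segNorm (x : ℕ → ℝ) (s : Set ℕ) : ℝ :=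
  Real.sqrt (∑' i, s.indicator (fun j => (x j) ^ 2) i)

/-- The `JT_{2,p}` norm on finitely supported sequences:
`‖x‖ = sup {(∑_k ‖x‖_{s_k}^p)^(1/p) : s₁,…,s_n pairwise disjoint segments}`. -/
noncomputable def jtNorm (le : ℕ → ℕ → Prop) (p : ℝ) (x : ℕ → ℝ) : ℝ :=
  sSup { r : ℝ | ∃ (n : ℕ) (s : Fin n → Set ℕ),
    (∀ k, IsSegment le (s k)) ∧
    (∀ k l, k ≠ l → Disjoint (s k) (s l)) ∧
    r = (∑ k : Fin n, segNorm x (s k) ^ p) ^ (1 / p) }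

/-- A block sequence of finitely supported vectors. -/
def IsBlockSeq (x : ℕ → ℕ → ℝ) : Prop :=
  (∀ n, (Function.support (x n)).Finite) ∧
  ∀ n i j, x n i ≠ 0 → x (n + 1) j ≠ 0 → i < j

/-- The final segment `σ_{>l} = {k ∈ σ : k > l}`. -/
def finalSeg (σ : Set ℕ) (l : ℕ) : Set ℕ := {k ∈ σ | l < k}

/-- Two final segments are incomparable when their least elements are `le`-incomparable. -/
def IncompFinal (le : ℕ → ℕ → Prop) (A B : Set ℕ) : Prop :=
  A.Nonempty ∧ B.Nonempty ∧ ¬ le (sInf A) (sInf B) ∧ ¬ le (sInf B) (sInf A)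

/-!
By Ramsey's theorem for pairs, either some infinite set of indices contains no two `n ≠ m` with
`x_n` and `x_m` both `ε`-large on a common segment, which is the claim, or along an ultrafilter
almost all pairs `n < m` are. In the latter case the last point `a` of `supp x_n` on the common
segment carries `ε` of the `ℓ₂`-mass of `x_n` below it, and, the supports being successive, `ε`
of the mass of `x_m` lies on a segment above `a`. Fixing such an `a = A n` along the ultrafilter
and applying Ramsey again to the comparability of the nodes `A n`: an infinite antichain yields,
for a single `m`, arbitrarily many disjoint segments each carrying `ε` of `x_m`, impossible as
`‖x_m‖ = 1`; an infinite chain lies in a branch `σ` with `‖x_n|_σ‖ ≥ ε` for infinitely many `n`,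
contradicting `‖x_n|_σ‖ → 0`.
-/

theorem sum_rpow_le_rpow_of_sum_sq_le {ι : Type*} (s : Finset ι) {a : ι → ℝ} {R p : ℝ}
    (ha : ∀ i ∈ s, 0 ≤ a i) (hR : 0 ≤ R) (hsum : ∑ i ∈ s, a i ^ 2 ≤ R ^ 2) (hp : 2 ≤ p) :
    ∑ i ∈ s, a i ^ p ≤ R ^ p := by
  have hsplit : ∀ b : ℝ, 0 ≤ b → b ^ p = b ^ (p - 2) * b ^ 2 := fun b hb => by
    rw [← Real.rpow_natCast, ← Real.rpow_add' hb (by norm_num; linarith)]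
    norm_num
  calc ∑ i ∈ s, a i ^ p
      ≤ ∑ i ∈ s, R ^ (p - 2) * a i ^ 2 := Finset.sum_le_sum fun i hi => by
        have hai : a i ≤ R := by
          refine (pow_le_pow_iff_left₀ (ha i hi) hR two_ne_zero).1 (le_trans ?_ hsum)
          exact Finset.single_le_sum (f := fun i => a i ^ 2) (fun j _ => sq_nonneg _) hi
        rw [hsplit _ (ha i hi)]
        gcongr
        exact ha i hi
    _ = R ^ (p - 2) * ∑ i ∈ s, a i ^ 2 := by rw [Finset.mul_sum]
    _ ≤ R ^ p := by
        rw [hsplit R hR]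
        gcongr

theorem Ultrafilter.eventually_eventually_or_eventually_eventually_not {α : Type*}
    (U : Ultrafilter α) (R : α → α → Prop) :
    (∀ᶠ n in U, ∀ᶠ m in U, R n m) ∨ ∀ᶠ n in U, ∀ᶠ m in U, ¬ R n m :=
  Ultrafilter.eventually_or.1 (.of_forall fun n => U.em (R n))

theorem Ultrafilter.exists_strictMono_of_eventually {U : Ultrafilter ℕ}
    (hU : (U : Filter ℕ) ≤ atTop) {P : ℕ → Prop} {R : ℕ → ℕ → Prop} (hP : ∀ᶠ n in U, P n)
    (hR : ∀ᶠ n in U, ∀ᶠ m in U, R n m) :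
    ∃ φ : ℕ → ℕ, StrictMono φ ∧ (∀ k, P (φ k)) ∧ ∀ k l, k < l → R (φ k) (φ l) := by
  obtain ⟨φ, hφP, hφR⟩ := exists_seq_of_forall_finset_exists
    (fun n => P n ∧ ∀ᶠ m in U, R n m) (fun n m => n < m ∧ R n m) fun s hs =>
      ((hP.and hR).and ((Filter.eventually_all_finset s).2 fun n hn =>
        (eventually_gt_atTop n |>.filter_mono hU).and (hs n hn).2)).exists
  exact ⟨φ, fun k l hkl => (hφR k l hkl).1, fun k => (hφP k).1, fun k l hkl => (hφR k l hkl).2⟩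

section SegNorm

variable {x : ℕ → ℝ}

theorem segNorm_nonneg (x : ℕ → ℝ) (s : Set ℕ) : 0 ≤ segNorm x s := Real.sqrt_nonneg _

theorem segNorm_empty (x : ℕ → ℝ) : segNorm x ∅ = 0 := by simp [segNorm]

theorem finite_support_indicator (hx : x.support.Finite) (s : Set ℕ) :
    (s.indicator x).support.Finite :=
  hx.subset <| by rw [Set.support_indicator]; exact Set.inter_subset_right

theorem segNorm_indicator (x : ℕ → ℝ) (s t : Set ℕ) :
    segNorm (s.indicator x) t = segNorm x (s ∩ t) := by
  unfold segNorm
  congr 1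
  refine tsum_congr fun i => ?_
  by_cases hs : i ∈ s <;> by_cases ht : i ∈ t <;> simp [hs, ht]

open Classical in
theorem segNorm_sq_eq_sum (hx : x.support.Finite) (s : Set ℕ) :
    segNorm x s ^ 2 = ∑ i ∈ hx.toFinset with i ∈ s, x i ^ 2 := by
  rw [segNorm, Real.sq_sqrt (tsum_nonneg fun i => Set.indicator_nonneg (fun _ _ => sq_nonneg _) i),
    tsum_eq_sum (s := hx.toFinset), Finset.sum_filter]
  · exact Finset.sum_congr rfl fun i _ => Set.indicator_apply _ _ _
  · intro i hi
    simp [Set.indicator_apply, Function.notMem_support.1 (by simpa using hi)]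

theorem segNorm_mono (hx : x.support.Finite) {s t : Set ℕ} (hst : s ∩ x.support ⊆ t) :
    segNorm x s ≤ segNorm x t := by
  refine (pow_le_pow_iff_left₀ (segNorm_nonneg x s) (segNorm_nonneg x t) two_ne_zero).1 ?_
  rw [segNorm_sq_eq_sum hx, segNorm_sq_eq_sum hx]
  refine Finset.sum_le_sum_of_subset_of_nonneg (fun i hi => ?_) fun i _ _ => sq_nonneg _
  simp only [Finset.mem_filter, Set.Finite.mem_toFinset] at hi ⊢
  exact ⟨hi.1, hst ⟨hi.2, hi.1⟩⟩

theorem nonempty_inter_support_of_segNorm_pos (hx : x.support.Finite) {s : Set ℕ}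
    (h : 0 < segNorm x s) : (s ∩ x.support).Nonempty := by
  by_contra hempty
  have := segNorm_mono hx (Set.not_nonempty_iff_eq_empty.1 hempty).subset
  rw [segNorm_empty] at this
  linarith

theorem sum_segNorm_sq_le (hx : x.support.Finite) {n : ℕ} (s : Fin n → Set ℕ)
    (hdisj : ∀ k l, k ≠ l → Disjoint (s k) (s l)) :
    ∑ k, segNorm x (s k) ^ 2 ≤ segNorm x Set.univ ^ 2 := by
  classical
  simp only [segNorm_sq_eq_sum hx]
  rw [← Finset.sum_biUnion]
  · refine Finset.sum_le_sum_of_subset_of_nonneg (Finset.biUnion_subset.2 fun k _ i hi => ?_)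
      fun i _ _ => sq_nonneg _
    simp only [Finset.mem_filter] at hi ⊢
    exact ⟨hi.1, Set.mem_univ i⟩
  · intro k _ l _ hkl
    exact Finset.disjoint_filter.2 fun i _ hik hil => Set.disjoint_left.1 (hdisj k l hkl) hik hil

end SegNorm

section JTNorm

variable {le : ℕ → ℕ → Prop} {p : ℝ} {x : ℕ → ℝ}

theorem rpow_sum_segNorm_le_segNorm_univ (hx : x.support.Finite) (hp : 2 ≤ p) {n : ℕ}
    (s : Fin n → Set ℕ) (hdisj : ∀ k l, k ≠ l → Disjoint (s k) (s l)) :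
    (∑ k, segNorm x (s k) ^ p) ^ (1 / p) ≤ segNorm x Set.univ := by
  have hsum : ∑ k, segNorm x (s k) ^ p ≤ segNorm x Set.univ ^ p :=
    sum_rpow_le_rpow_of_sum_sq_le _ (fun k _ => segNorm_nonneg _ _) (segNorm_nonneg _ _)
      (sum_segNorm_sq_le hx s hdisj) hp
  calc (∑ k, segNorm x (s k) ^ p) ^ (1 / p)
      ≤ (segNorm x Set.univ ^ p) ^ (1 / p) := by
        gcongr
        exact Finset.sum_nonneg fun k _ => Real.rpow_nonneg (segNorm_nonneg _ _) _
    _ = segNorm x Set.univ := by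
        rw [one_div, Real.rpow_rpow_inv (segNorm_nonneg _ _) (by linarith)]

theorem jtNorm_le_segNorm_univ (hx : x.support.Finite) (hp : 2 ≤ p) :
    jtNorm le p x ≤ segNorm x Set.univ :=
  csSup_le ⟨_, 0, Fin.elim0, fun k => k.elim0, fun k => k.elim0, rfl⟩ <| by
    rintro _ ⟨n, s, -, hdisj, rfl⟩
    exact rpow_sum_segNorm_le_segNorm_univ hx hp s hdisj

theorem rpow_sum_segNorm_le_jtNorm (hx : x.support.Finite) (hp : 2 ≤ p) {n : ℕ}
    (s : Fin n → Set ℕ) (hseg : ∀ k, IsSegment le (s k))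
    (hdisj : ∀ k l, k ≠ l → Disjoint (s k) (s l)) :
    (∑ k, segNorm x (s k) ^ p) ^ (1 / p) ≤ jtNorm le p x := by
  refine le_csSup ⟨segNorm x Set.univ, ?_⟩ ⟨n, s, hseg, hdisj, rfl⟩
  rintro _ ⟨n, s, -, hdisj, rfl⟩
  exact rpow_sum_segNorm_le_segNorm_univ hx hp s hdisj

theorem jtNorm_nonneg (hx : x.support.Finite) (hp : 2 ≤ p) : 0 ≤ jtNorm le p x := by
  have := rpow_sum_segNorm_le_jtNorm (le := le) hx hp Fin.elim0 (fun k => k.elim0)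
    (fun k => k.elim0)
  rwa [Finset.univ_eq_empty, Finset.sum_empty, Real.zero_rpow (by positivity)] at this

theorem segNorm_le_jtNorm (hx : x.support.Finite) (hp : 2 ≤ p) {s : Set ℕ}
    (hs : IsSegment le s) : segNorm x s ≤ jtNorm le p x := by
  have := rpow_sum_segNorm_le_jtNorm hx hp (fun _ : Fin 1 => s) (fun _ => hs)
    (fun k l hkl => absurd (Subsingleton.elim k l) hkl)
  rwa [Fin.sum_univ_one, one_div, Real.rpow_rpow_inv (segNorm_nonneg _ _) (by linarith)] at this

theorem jtNorm_indicator_le_segNorm (hx : x.support.Finite) (hp : 2 ≤ p) (s : Set ℕ) :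
    jtNorm le p (s.indicator x) ≤ segNorm x s := by
  have := jtNorm_le_segNorm_univ (le := le) (finite_support_indicator hx s) hp
  rwa [segNorm_indicator, Set.inter_univ] at this

theorem natCast_mul_rpow_le_one (hx : x.support.Finite) (hp : 2 ≤ p) (hx1 : jtNorm le p x ≤ 1)
    {ε : ℝ} (hε : 0 ≤ ε) {r : ℕ} (t : Fin r → Set ℕ) (hseg : ∀ k, IsSegment le (t k))
    (hdisj : ∀ k l, k ≠ l → Disjoint (t k) (t l)) (hbig : ∀ k, ε ≤ segNorm x (t k)) :
    (r : ℝ) * ε ^ p ≤ 1 := by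
  have hsum := rpow_sum_segNorm_le_jtNorm hx hp t hseg hdisj
  calc (r : ℝ) * ε ^ p = ∑ _k : Fin r, ε ^ p := by simp
    _ ≤ ∑ k, segNorm x (t k) ^ p := Finset.sum_le_sum fun k _ => by gcongr; exact hbig k
    _ = ((∑ k, segNorm x (t k) ^ p) ^ (1 / p)) ^ p := by
        rw [one_div, Real.rpow_inv_rpow (Finset.sum_nonneg fun k _ =>
          Real.rpow_nonneg (segNorm_nonneg _ _) _) (by linarith)]
    _ ≤ 1 := Real.rpow_le_one (Real.rpow_nonneg (Finset.sum_nonneg fun k _ =>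
          Real.rpow_nonneg (segNorm_nonneg _ _) _) _) (hsum.trans hx1) (by linarith)

end JTNorm

theorem jtNorm_zero {le : ℕ → ℕ → Prop} {p : ℝ} (hp : 2 ≤ p) : jtNorm le p 0 = 0 :=
  le_antisymm ((jtNorm_le_segNorm_univ (by simp) hp).trans_eq (by simp [segNorm]))
    (jtNorm_nonneg (by simp) hp)

theorem IsBlockSeq.lt_of_lt {x : ℕ → ℕ → ℝ} (hx : IsBlockSeq x) (hne : ∀ n, x n ≠ 0)
    {n m : ℕ} (hnm : n < m) {i j : ℕ} (hi : x n i ≠ 0) (hj : x m j ≠ 0) : i < j := by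
  induction m, hnm using Nat.le_induction generalizing j with
  | base => exact hx.2 n i j hi hj
  | succ m _ ih =>
    obtain ⟨k, hk⟩ := Function.ne_iff.1 (hne m)
    exact (ih hk).trans (hx.2 m k j hk hj)

namespace IsJTTree

variable {le : ℕ → ℕ → Prop}

theorem le_of_le_of_total (hT : IsJTTree le) {a b : ℕ} (hab : a ≤ b) (h : le a b ∨ le b a) :
    le a b := by
  rcases h with h | h
  · exact h
  · obtain rfl := le_antisymm hab (hT.compat h)
    exact hT.refl a

theorem isSegment_setOf_le (hT : IsJTTree le) (a : ℕ) : IsSegment le {k | le k a} := by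
  have hne : {k | le k a}.Nonempty := ⟨a, hT.refl a⟩
  refine ⟨sInf {k | le k a}, a, Nat.sInf_mem hne,
    Set.ext fun k => ⟨fun hk => ⟨?_, hk⟩, And.right⟩⟩
  exact hT.le_of_le_of_total (Nat.sInf_le hk) (hT.pred_linear a _ _ (Nat.sInf_mem hne) hk)

theorem disjoint_setOf_le (hT : IsJTTree le) {a b : ℕ} (hab : ¬ le a b) (hba : ¬ le b a) :
    Disjoint {k | le a k} {k | le b k} :=
  Set.disjoint_left.2 fun k hak hbk => (hT.pred_linear k a b hak hbk).elim hab hba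

theorem exists_isBranch_setOf_le_subset (hT : IsJTTree le) {B : Set ℕ} (hB : IsChain le B) :
    ∃ σ, IsBranch le σ ∧ ∀ a ∈ B, {k | le k a} ⊆ σ := by
  have hW : IsChain le (⋃ a ∈ B, {k | le k a}) := by
    intro k hk j hj _
    simp only [Set.mem_iUnion] at hk hj
    obtain ⟨a, ha, hka⟩ := hk
    obtain ⟨b, hb, hjb⟩ := hj
    rcases eq_or_ne a b with rfl | hab
    · exact hT.pred_linear a k j hka hjb
    rcases hB ha hb hab with h | h
    · exact hT.pred_linear b k j (hT.trans hka h) hjb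
    · exact hT.pred_linear a k j hka (hT.trans hjb h)
  obtain ⟨σ, hσ, hWσ⟩ := hW.exists_maxChain
  exact ⟨σ, ⟨hσ.1, fun τ hτ hστ => hσ.2 hτ hστ⟩, fun a ha k hk => hWσ (Set.mem_biUnion ha hk)⟩

theorem exists_node_of_le_segNorm (hT : IsJTTree le) {y z : ℕ → ℝ} (hy : y.support.Finite)
    (hz : z.support.Finite) (hyz : ∀ i j, y i ≠ 0 → z j ≠ 0 → i < j) {s : Set ℕ}
    (hs : IsSegment le s) {ε : ℝ} (hε : 0 < ε) (hys : ε ≤ segNorm y s)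
    (hzs : ε ≤ segNorm z s) :
    ∃ a ∈ y.support, ε ≤ segNorm y {k | le k a} ∧
      ∃ t, IsSegment le t ∧ t ⊆ {k | le a k} ∧ ε ≤ segNorm z t := by
  obtain ⟨u, v, -, rfl⟩ := hs
  have hne := nonempty_inter_support_of_segNorm_pos hy (hε.trans_le hys)
  have hbdd : BddAbove ({k | le u k ∧ le k v} ∩ y.support) :=
    (hy.subset Set.inter_subset_right).bddAbove
  -- `a` is the last point of `supp y` on `s`; as `supp z` comes after `supp y`, the part of `s`
  -- carrying `z` lies above `a`.
  obtain ⟨⟨-, hav⟩, hya⟩ := Nat.sSup_mem hne hbdd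
  set a := sSup ({k | le u k ∧ le k v} ∩ y.support)
  refine ⟨a, hya, hys.trans (segNorm_mono hy fun b hb => ?_), {k | le a k ∧ le k v},
    ⟨a, v, hav, rfl⟩, fun k hk => hk.1, hzs.trans (segNorm_mono hz ?_)⟩
  · exact hT.le_of_le_of_total (le_csSup hbdd hb) (hT.pred_linear v b a hb.1.2 hav)
  · rintro j ⟨⟨-, hjv⟩, hzj⟩
    exact ⟨hT.le_of_le_of_total (hyz a j hya hzj).le (hT.pred_linear v a j hav hjv), hjv⟩

end IsJTTree

def LargeOnCommonSegment (le : ℕ → ℕ → Prop) (p ε : ℝ) (y z : ℕ → ℝ) : Prop :=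
  ∃ s, IsSegment le s ∧ ε ≤ jtNorm le p (s.indicator y) ∧ ε ≤ jtNorm le p (s.indicator z)

namespace IsJTTree

variable {le : ℕ → ℕ → Prop} {p : ℝ} {x : ℕ → ℕ → ℝ} {ε : ℝ}

theorem eventually_exists_node (hT : IsJTTree le) (hp : 2 ≤ p)
    (hfin : ∀ n, (x n).support.Finite)
    (hsep : ∀ n m i j, n < m → x n i ≠ 0 → x m j ≠ 0 → i < j) (hε : 0 < ε)
    {U : Ultrafilter ℕ} (hU : (U : Filter ℕ) ≤ atTop)
    (hbad : ∀ᶠ n in U, ∀ᶠ m in U, LargeOnCommonSegment le p ε (x n) (x m)) :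
    ∀ᶠ n in U, ∃ a, ε ≤ segNorm (x n) {k | le k a} ∧
      ∀ᶠ m in U, ∃ t, IsSegment le t ∧ t ⊆ {k | le a k} ∧ ε ≤ segNorm (x m) t := by
  filter_upwards [hbad] with n hn
  have hnode : ∀ᶠ m in U, ∃ a ∈ (x n).support, ε ≤ segNorm (x n) {k | le k a} ∧
      ∃ t, IsSegment le t ∧ t ⊆ {k | le a k} ∧ ε ≤ segNorm (x m) t := by
    filter_upwards [hn, eventually_gt_atTop n |>.filter_mono hU] with m ⟨s, hs, hns, hms⟩ hnm
    exact hT.exists_node_of_le_segNorm (hfin n) (hfin m) (fun i j => hsep n m i j hnm) hs hε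
      (hns.trans (jtNorm_indicator_le_segNorm (hfin n) hp s))
      (hms.trans (jtNorm_indicator_le_segNorm (hfin m) hp s))
  obtain ⟨a, -, ha⟩ := (Ultrafilter.eventually_exists_mem_iff (hfin n)).1 hnode
  obtain ⟨m, ham⟩ := ha.exists
  exact ⟨a, ham.1, ha.mono fun _ h => h.2⟩

theorem exists_isBranch_le_jtNorm_indicator (hT : IsJTTree le) (hp : 2 ≤ p)
    (hfin : ∀ n, (x n).support.Finite) {A φ : ℕ → ℕ}
    (hbig : ∀ k, ε ≤ segNorm (x (φ k)) {j | le j (A (φ k))})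
    (hcomp : ∀ k l, k < l → le (A (φ k)) (A (φ l)) ∨ le (A (φ l)) (A (φ k))) :
    ∃ σ, IsBranch le σ ∧ ∀ k, ε ≤ jtNorm le p (σ.indicator (x (φ k))) := by
  have hchain : IsChain le (Set.range (A ∘ φ)) := by
    rintro _ ⟨k, rfl⟩ _ ⟨l, rfl⟩ hne
    rcases lt_trichotomy k l with h | rfl | h
    · exact hcomp k l h
    · exact absurd rfl hne
    · exact (hcomp l k h).symm
  obtain ⟨σ, hσ, hσA⟩ := hT.exists_isBranch_setOf_le_subset hchain
  refine ⟨σ, hσ, fun k => ?_⟩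
  calc ε ≤ segNorm (x (φ k)) {j | le j (A (φ k))} := hbig k
    _ = segNorm (σ.indicator (x (φ k))) {j | le j (A (φ k))} := by
        rw [segNorm_indicator, Set.inter_eq_right.2 (hσA (A (φ k)) ⟨k, rfl⟩)]
    _ ≤ jtNorm le p (σ.indicator (x (φ k))) :=
        segNorm_le_jtNorm (finite_support_indicator (hfin _) σ) hp (hT.isSegment_setOf_le _)

theorem natCast_mul_rpow_le_one_of_antichain (hT : IsJTTree le) (hp : 2 ≤ p)
    (hfin : ∀ n, (x n).support.Finite) (hnorm : ∀ n, jtNorm le p (x n) ≤ 1) (hε : 0 ≤ ε)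
    {U : Ultrafilter ℕ} {A φ : ℕ → ℕ}
    (hbig : ∀ k, ∀ᶠ m in U, ∃ t, IsSegment le t ∧ t ⊆ {j | le (A (φ k)) j} ∧ ε ≤ segNorm (x m) t)
    (hinc : ∀ k l, k < l → ¬ (le (A (φ k)) (A (φ l)) ∨ le (A (φ l)) (A (φ k)))) (r : ℕ) :
    (r : ℝ) * ε ^ p ≤ 1 := by
  have hinc' : ∀ k l : Fin r, k ≠ l → ¬ le (A (φ k)) (A (φ l)) := fun k l hkl h => by
    rcases lt_or_gt_of_ne (Fin.val_ne_of_ne hkl) with hlt | hlt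
    · exact hinc k l hlt (Or.inl h)
    · exact hinc l k hlt (Or.inr h)
  obtain ⟨m, hm⟩ := (Filter.eventually_all.2 fun k : Fin r => hbig k).exists
  choose t hseg hup hmass using hm
  exact natCast_mul_rpow_le_one (hfin m) hp (hnorm m) hε t hseg (fun k l hkl =>
    (hT.disjoint_setOf_le (hinc' k l hkl) (hinc' l k hkl.symm)).mono (hup k) (hup l)) hmass

theorem not_eventually_eventually_largeOnCommonSegment (hT : IsJTTree le) (hp : 2 ≤ p)
    (hfin : ∀ n, (x n).support.Finite)
    (hsep : ∀ n m i j, n < m → x n i ≠ 0 → x m j ≠ 0 → i < j)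
    (hnorm : ∀ n, jtNorm le p (x n) ≤ 1)
    (hbranch : ∀ σ, IsBranch le σ →
      Tendsto (fun n => jtNorm le p (σ.indicator (x n))) atTop (nhds 0))
    (hε : 0 < ε) {U : Ultrafilter ℕ} (hU : (U : Filter ℕ) ≤ atTop) :
    ¬ ∀ᶠ n in U, ∀ᶠ m in U, LargeOnCommonSegment le p ε (x n) (x m) := by
  intro hbad
  obtain ⟨A, hA⟩ := (hT.eventually_exists_node hp hfin hsep hε hU hbad).choice
  rcases U.eventually_eventually_or_eventually_eventually_not
    (fun n m => le (A n) (A m) ∨ le (A m) (A n)) with hcomp | hinc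
  · obtain ⟨φ, hφ, hφA, hφcomp⟩ := Ultrafilter.exists_strictMono_of_eventually hU hA hcomp
    obtain ⟨σ, hσ, hσbig⟩ :=
      hT.exists_isBranch_le_jtNorm_indicator hp hfin (fun k => (hφA k).1) hφcomp
    obtain ⟨k, hk⟩ := (((hbranch σ hσ).comp hφ.tendsto_atTop).eventually (gt_mem_nhds hε)).exists
    exact (hσbig k).not_gt hk
  · obtain ⟨φ, -, hφA, hφinc⟩ := Ultrafilter.exists_strictMono_of_eventually hU hA hinc
    obtain ⟨r, hr⟩ := exists_nat_gt (ε ^ p)⁻¹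
    have := hT.natCast_mul_rpow_le_one_of_antichain hp hfin hnorm hε.le (fun k => (hφA k).2)
      hφinc r
    rw [inv_lt_iff_one_lt_mul₀ (Real.rpow_pos_of_pos hε p)] at hr
    linarith

end IsJTTree

theorem stmt1 (le : ℕ → ℕ → Prop) (hT : IsJTTree le) (p : ℝ) (hp : 2 < p)
    (x : ℕ → ℕ → ℝ) (hblock : IsBlockSeq x)
    (hnorm : ∀ n, jtNorm le p (x n) = 1)
    (hbranch : ∀ σ, IsBranch le σ →
      Tendsto (fun n => jtNorm le p (σ.indicator (x n))) atTop (nhds 0))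
    (ε : ℝ) (hε : 0 < ε) (n₀ : ℕ) :
    ∃ L : Set ℕ, L.Infinite ∧ ∀ s, IsSegment le s → sInf s ≤ n₀ →
      {n | n ∈ L ∧ ε ≤ jtNorm le p (s.indicator (x n))}.Subsingleton := by
  have hne : ∀ n, x n ≠ 0 := fun n h => by simpa [h, jtNorm_zero hp.le] using hnorm n
  have hU := Nat.hyperfilter_le_atTop
  rcases (Filter.hyperfilter ℕ).eventually_eventually_or_eventually_eventually_not
    (fun n m => LargeOnCommonSegment le p ε (x n) (x m)) with hbad | hgood
  · exact absurd hbad <| hT.not_eventually_eventually_largeOnCommonSegment hp.le hblock.1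
      (fun n m i j hnm => hblock.lt_of_lt hne hnm) (fun n => (hnorm n).le) hbranch hε hU
  obtain ⟨φ, hφ, -, hφgood⟩ := Ultrafilter.exists_strictMono_of_eventually hU
    (P := fun _ => True) (.of_forall fun _ => trivial) hgood
  refine ⟨Set.range φ, Set.infinite_range_of_injective hφ.injective, fun s hs _ => ?_⟩
  rintro _ ⟨⟨k, rfl⟩, hk⟩ _ ⟨⟨l, rfl⟩, hl⟩
  rcases lt_trichotomy k l with h | rfl | h
  · exact (hφgood k l h ⟨s, hs, hk, hl⟩).elim
  · rfl
  · exact (hφgood l k h ⟨s, hs, hl, hk⟩).elim
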